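/- arXiv:1404.3592 — 5 statements merged into one kernel-verified Lean document; each statement's English description precedes it below -/
import Mathlib

section
/- Let S₀ ∈ ℂ^{n×n} be nonzero, let σ ∈ {+1, −1}, and set E⁰ = σ S₀/‖S₀‖_F. Define the real-linear operator 𝓛 : ℂ^{n×n} → ℂ^{n×n} by 𝓛B = Re⟨B, S₀⟩ E⁰ + Re⟨E⁰, S₀⟩ B. Then 𝓛 is injective: 𝓛B = 0 implies B = 0. (This is the invertibility of the Jacobian of the equilibrium equation at the unperturbed stationary points E⁰ = ±S₀/‖S₀‖_F.) -/
open Matrix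

/-- Frobenius inner product `⟨A,B⟩ = trace(Aᴴ B)`. -/
noncomputable def frobInner {n : ℕ} (A B : Matrix (Fin n) (Fin n) ℂ) : ℂ :=
  (Aᴴ * B).trace

/-- Frobenius norm `‖A‖_F = √⟨A,A⟩`. -/
noncomputable def frobNorm {n : ℕ} (A : Matrix (Fin n) (Fin n) ℂ) : ℝ :=
  Real.sqrt (frobInner A A).re

lemma frobInner_add_left {n : ℕ} (X Y Z : Matrix (Fin n) (Fin n) ℂ) :
    frobInner (X + Y) Z = frobInner X Z + frobInner Y Z := by
  simp [frobInner, conjTranspose_add, add_mul, trace_add]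

lemma frobInner_smul_left {n : ℕ} (c : ℝ) (X Z : Matrix (Fin n) (Fin n) ℂ) :
    frobInner (c • X) Z = c • frobInner X Z := by
  simp [frobInner, Matrix.smul_mul]

lemma frobInner_self_re {n : ℕ} (A : Matrix (Fin n) (Fin n) ℂ) :
    (frobInner A A).re = ∑ i, ∑ j, Complex.normSq (A j i) := by
  simp [frobInner, Matrix.trace, Matrix.mul_apply, Matrix.diag, Complex.re_sum,
    Complex.normSq_eq_conj_mul_self, Complex.normSq_apply]

lemma frobInner_self_re_pos {n : ℕ} (A : Matrix (Fin n) (Fin n) ℂ) (hA : A ≠ 0) :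
    0 < (frobInner A A).re := by
  rw [frobInner_self_re]
  have h : ∃ j i, A j i ≠ 0 := by
    by_contra h
    push_neg at h
    exact hA (by ext j i; simp [h])
  obtain ⟨j, i, hji⟩ := h
  have : 0 < Complex.normSq (A j i) := Complex.normSq_pos.mpr hji
  have h1 : 0 < ∑ j', Complex.normSq (A j' i) :=
    Finset.sum_pos' (fun _ _ => Complex.normSq_nonneg _) ⟨j, Finset.mem_univ _, this⟩
  exact Finset.sum_pos' (fun _ _ => Finset.sum_nonneg fun _ _ => Complex.normSq_nonneg _)
    ⟨i, Finset.mem_univ _, h1⟩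

theorem stmt5 {n : ℕ} (S₀ : Matrix (Fin n) (Fin n) ℂ) (hS₀ : S₀ ≠ 0)
    (σ : ℝ) (hσ : σ = 1 ∨ σ = -1)
    (E0 : Matrix (Fin n) (Fin n) ℂ) (hE0 : E0 = (σ / frobNorm S₀) • S₀) :
    ∀ B : Matrix (Fin n) (Fin n) ℂ,
      (frobInner B S₀).re • E0 + (frobInner E0 S₀).re • B = 0 → B = 0 := by
  intro B hB
  set t : ℝ := (frobInner S₀ S₀).re with ht
  have htpos : 0 < t := frobInner_self_re_pos S₀ hS₀
  have hsqrt : 0 < Real.sqrt t := Real.sqrt_pos.mpr htpos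
  have ha : (frobInner E0 S₀).re = σ * Real.sqrt t := by
    rw [hE0, frobInner_smul_left]
    have hft : frobNorm S₀ = Real.sqrt t := rfl
    have h2 : Real.sqrt t * Real.sqrt t = t := Real.mul_self_sqrt htpos.le
    rw [Complex.smul_re, hft, ← ht, smul_eq_mul, div_mul_eq_mul_div, div_eq_iff hsqrt.ne']
    linear_combination (-σ) * Real.sq_sqrt htpos.le
  have haNe : (frobInner E0 S₀).re ≠ 0 := by
    rw [ha]
    rcases hσ with h | h <;> simp [h, hsqrt.ne']
  set r : ℝ := (frobInner B S₀).re with hr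
  have hkey := congrArg (fun M => (frobInner M S₀).re) hB
  simp only [frobInner_add_left, frobInner_smul_left, Complex.add_re, Complex.smul_re, smul_eq_mul, ← hr] at hkey
  have h0 : (frobInner (0 : Matrix (Fin n) (Fin n) ℂ) S₀).re = 0 := by
    simp [frobInner]
  rw [h0] at hkey
  -- hkey : r * (frobInner E0 S₀).re + (frobInner E0 S₀).re * r = 0
  have hr0 : r = 0 := by
    have : (2 * (frobInner E0 S₀).re) * r = 0 := by linarith [hkey]
    rcases mul_eq_zero.mp this with h | h
    · exact absurd (by linarith : (frobInner E0 S₀).re = 0) haNe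
    · exact h
  rw [hr0, zero_smul, zero_add] at hB
  have := smul_eq_zero.mp hB
  rcases this with h | h
  · exact absurd h haNe
  · exact h
end

section
/- Suppose in addition that for each t, E(t) = U(t)T(t)V(t)^H with U(t), V(t) ∈ ℂ^{n×2} having orthonormal columns, T(t) ∈ ℂ^{2×2} invertible, ‖E(t)‖_F = 1, and that E solves the projected differential equation Ė = −P_E(S) + Re⟨E,S⟩E, where S(t) = y(t) y(t)^H G(t)^H + G(t)^H x(t) x(t)^H and P_E(Z) = Z − (I − UU^H) Z (I − VV^H). Then d/dt |y(t)^H x(t)| = −ε |y(t)^H x(t)| · ‖P_E(S) − Re⟨E,S⟩E‖_F². -/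
open Matrix

/-- `G` is a group inverse of `M`. -/
def IsGroupInverse {n : ℕ} (M G : Matrix (Fin n) (Fin n) ℂ) : Prop :=
  M * G = G * M ∧ G * M * G = G ∧ M * G * M = M

/-- The matrix `S = y yᴴ Gᴴ + Gᴴ x xᴴ`. -/
noncomputable def Smat {n : ℕ} (x y : Fin n → ℂ) (G : Matrix (Fin n) (Fin n) ℂ) :
    Matrix (Fin n) (Fin n) ℂ :=
  vecMulVec y (star y) * Gᴴ + Gᴴ * vecMulVec x (star x)

/-- Orthogonal projection onto the tangent space of the rank-2 manifold at `E = U T Vᴴ`: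
`P_E(Z) = Z − (I − UUᴴ) Z (I − VVᴴ)`. -/
noncomputable def PE {n : ℕ} (U V : Matrix (Fin n) (Fin 2) ℂ) (Z : Matrix (Fin n) (Fin n) ℂ) :
    Matrix (Fin n) (Fin n) ℂ :=
  Z - (1 - U * Uᴴ) * Z * (1 - V * Vᴴ)

/-!
Write `D = P_E(S) - Re⟨E,S⟩ E`, so that the differential equation reads `Ė = -D`. Since
`G x = 0` and `yᴴ G = 0`, the eigenvector derivative formulas give
`d/dt (yᴴ x) = ⟨S, Ṁ⟩ · yᴴ x`, hence `d/dt |yᴴ x| = Re⟨S, Ṁ⟩ · |yᴴ x| = -ε Re⟨S, D⟩ · |yᴴ x|`.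
Finally `Re⟨S, D⟩ = ‖D‖_F²`: `P_E` is a self-adjoint idempotent fixing `E = U T Vᴴ`, so
`P_E D = D`, and `Re⟨E, D⟩ = 0` because `‖E‖_F = 1`.
-/

theorem HasDerivAt.norm_of_eq_mul {f : ℝ → ℂ} {c : ℂ} {t : ℝ} (hf : HasDerivAt f (c * f t) t)
    (h0 : f t ≠ 0) : HasDerivAt (‖f ·‖) (c.re * ‖f t‖) t := by
  have h := hf.norm_sq.sqrt (by positivity)
  simp only [Real.sqrt_sq (norm_nonneg _)] at h
  convert h using 1
  rw [Complex.inner, mul_assoc, Complex.mul_conj', ← Complex.ofReal_pow,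
    Complex.re_mul_ofReal]
  field_simp [norm_ne_zero_iff.2 h0]

theorem HasDerivAt.star_dotProduct {n : ℕ} {x y : ℝ → Fin n → ℂ} {x' y' : Fin n → ℂ} {t : ℝ}
    (hx : ∀ i, HasDerivAt (fun s => x s i) (x' i) t)
    (hy : ∀ i, HasDerivAt (fun s => y s i) (y' i) t) :
    HasDerivAt (fun s => star (y s) ⬝ᵥ x s) (star y' ⬝ᵥ x t + star (y t) ⬝ᵥ x') t := by
  simpa [dotProduct, Finset.sum_add_distrib] using
    HasDerivAt.fun_sum fun i (_ : i ∈ Finset.univ) => (hy i).star.mul (hx i)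

section Frobenius

variable {n : ℕ}

theorem frobInner_sub_left (A B C : Matrix (Fin n) (Fin n) ℂ) :
    frobInner (A - B) C = frobInner A C - frobInner B C := by
  simp [frobInner, sub_mul]

theorem frobInner_sub_right (A B C : Matrix (Fin n) (Fin n) ℂ) :
    frobInner A (B - C) = frobInner A B - frobInner A C := by
  simp [frobInner, mul_sub]

theorem frobInner_neg_right (A B : Matrix (Fin n) (Fin n) ℂ) :
    frobInner A (-B) = -frobInner A B := by
  simp [frobInner]

theorem frobInner_real_smul_left (r : ℝ) (A B : Matrix (Fin n) (Fin n) ℂ) :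
    frobInner (r • A) B = r * frobInner A B := by
  simp [frobInner, conjTranspose_smul, trace_smul, Complex.real_smul]

theorem frobInner_real_smul_right (r : ℝ) (A B : Matrix (Fin n) (Fin n) ℂ) :
    frobInner A (r • B) = r * frobInner A B := by
  simp [frobInner, trace_smul, Complex.real_smul]

theorem frobInner_smul_right (z : ℂ) (A B : Matrix (Fin n) (Fin n) ℂ) :
    frobInner A (z • B) = z * frobInner A B := by
  simp [frobInner, trace_smul]

open ComplexOrder in
theorem frobNorm_sq (A : Matrix (Fin n) (Fin n) ℂ) : frobNorm A ^ 2 = (frobInner A A).re :=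
  Real.sq_sqrt (Complex.nonneg_iff.1 (posSemidef_conjTranspose_mul_self A).trace_nonneg).1

theorem frobInner_mul_mul_left {P Q : Matrix (Fin n) (Fin n) ℂ} (hP : P.IsHermitian)
    (hQ : Q.IsHermitian) (Z W : Matrix (Fin n) (Fin n) ℂ) :
    frobInner (P * Z * Q) W = frobInner Z (P * W * Q) := by
  simp only [frobInner, conjTranspose_mul, hP.eq, hQ.eq]
  rw [mul_assoc, trace_mul_comm]
  simp only [mul_assoc]

end Frobenius

section Projection

variable {n : ℕ} {U V : Matrix (Fin n) (Fin 2) ℂ}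

theorem isHermitian_one_sub_mul_conjTranspose (U : Matrix (Fin n) (Fin 2) ℂ) :
    (1 - U * Uᴴ).IsHermitian :=
  isHermitian_one.sub (isHermitian_mul_conjTranspose_self U)

theorem one_sub_mul_conjTranspose_mul_eq_zero (hU : Uᴴ * U = 1) :
    (1 - U * Uᴴ) * U = 0 := by
  rw [Matrix.sub_mul, Matrix.one_mul, Matrix.mul_assoc, hU, Matrix.mul_one, sub_self]

theorem isIdempotentElem_one_sub_mul_conjTranspose (hU : Uᴴ * U = 1) :
    IsIdempotentElem (1 - U * Uᴴ) := by
  refine IsIdempotentElem.one_sub ?_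
  rw [IsIdempotentElem, Matrix.mul_assoc, ← Matrix.mul_assoc Uᴴ, hU, Matrix.one_mul]

theorem frobInner_PE_left (U V : Matrix (Fin n) (Fin 2) ℂ) (Z W : Matrix (Fin n) (Fin n) ℂ) :
    frobInner (PE U V Z) W = frobInner Z (PE U V W) := by
  rw [PE, PE, frobInner_sub_left, frobInner_sub_right,
    frobInner_mul_mul_left (isHermitian_one_sub_mul_conjTranspose U)
      (isHermitian_one_sub_mul_conjTranspose V)]

theorem PE_PE (hU : Uᴴ * U = 1) (hV : Vᴴ * V = 1) (Z : Matrix (Fin n) (Fin n) ℂ) :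
    PE U V (PE U V Z) = PE U V Z := by
  have key : ∀ P Q : Matrix (Fin n) (Fin n) ℂ, P * P = P → Q * Q = Q →
      Z - P * Z * Q - P * (Z - P * Z * Q) * Q = Z - P * Z * Q := by
    intro P Q hP hQ
    rw [Matrix.mul_sub, Matrix.sub_mul,
      show P * (P * Z * Q) * Q = P * P * Z * (Q * Q) by simp only [Matrix.mul_assoc], hP, hQ,
      sub_self, sub_zero]
  exact key _ _ (isIdempotentElem_one_sub_mul_conjTranspose hU).eq
    (isIdempotentElem_one_sub_mul_conjTranspose hV).eq

theorem PE_mul_mul_conjTranspose (hU : Uᴴ * U = 1) (T : Matrix (Fin 2) (Fin 2) ℂ) :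
    PE U V (U * T * Vᴴ) = U * T * Vᴴ := by
  rw [PE, ← Matrix.mul_assoc, ← Matrix.mul_assoc, one_sub_mul_conjTranspose_mul_eq_zero hU]
  simp

theorem PE_real_smul (U V : Matrix (Fin n) (Fin 2) ℂ) (r : ℝ) (Z : Matrix (Fin n) (Fin n) ℂ) :
    PE U V (r • Z) = r • PE U V Z := by
  simp [PE, smul_sub]

theorem PE_sub (U V : Matrix (Fin n) (Fin 2) ℂ) (Z W : Matrix (Fin n) (Fin n) ℂ) :
    PE U V (Z - W) = PE U V Z - PE U V W := by
  simp only [PE, Matrix.mul_sub, Matrix.sub_mul]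
  abel

theorem re_frobInner_PE_sub_smul_eq_frobNorm_sq (hU : Uᴴ * U = 1) (hV : Vᴴ * V = 1)
    {E : Matrix (Fin n) (Fin n) ℂ} (hPE : PE U V E = E) (hE : frobNorm E = 1)
    (S : Matrix (Fin n) (Fin n) ℂ) :
    (frobInner S (PE U V S - (frobInner E S).re • E)).re
      = frobNorm (PE U V S - (frobInner E S).re • E) ^ 2 := by
  set α := (frobInner E S).re
  set D := PE U V S - α • E
  have hPD : PE U V D = D := by rw [PE_sub, PE_PE hU hV, PE_real_smul, hPE]
  have hEE : (frobInner E E).re = 1 := by rw [← frobNorm_sq, hE, one_pow]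
  have hED : (frobInner E D).re = 0 := by
    have hES : frobInner E (PE U V S) = frobInner E S := by rw [← frobInner_PE_left, hPE]
    rw [frobInner_sub_right, hES, frobInner_real_smul_right, Complex.sub_re,
      Complex.re_ofReal_mul, hEE, mul_one, sub_self]
  calc (frobInner S D).re = (frobInner (PE U V S) D).re := by rw [frobInner_PE_left, hPD]
    _ = (frobInner (PE U V S - α • E) D).re := by
      rw [frobInner_sub_left, frobInner_real_smul_left, Complex.sub_re, Complex.re_ofReal_mul,
        hED, mul_zero, sub_zero]
    _ = frobNorm D ^ 2 := (frobNorm_sq D).symm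

end Projection

section Eigenvectors

variable {n : ℕ}

theorem frobInner_Smat (x y : Fin n → ℂ) (G Z : Matrix (Fin n) (Fin n) ℂ) :
    frobInner (Smat x y G) Z = star y ⬝ᵥ ((Z * G) *ᵥ y) + star x ⬝ᵥ ((G * Z) *ᵥ x) := by
  have hx : (vecMulVec x (star x) * G * Z).trace = star x ⬝ᵥ ((G * Z) *ᵥ x) := by
    rw [Matrix.mul_assoc, vecMulVec_mul, trace_vecMulVec, dotProduct_comm, dotProduct_mulVec]
  have hy : (G * vecMulVec y (star y) * Z).trace = star y ⬝ᵥ ((Z * G) *ᵥ y) := by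
    rw [Matrix.mul_assoc, trace_mul_comm, Matrix.mul_assoc, vecMulVec_mul, trace_vecMulVec,
      dotProduct_comm, dotProduct_mulVec]
  simp only [frobInner, Smat, conjTranspose_add, conjTranspose_mul, conjTranspose_conjTranspose,
    conjTranspose_vecMulVec, star_star, Matrix.add_mul, trace_add, hx, hy]

theorem star_dotProduct_variation_eq_frobInner_Smat_mul {x y x' y' : Fin n → ℂ}
    {G : Matrix (Fin n) (Fin n) ℂ} (hGx : G *ᵥ x = 0) (hyG : star y ᵥ* G = 0)
    (M' : Matrix (Fin n) (Fin n) ℂ)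
    (hx' : x' = (star x ⬝ᵥ (G *ᵥ (M' *ᵥ x))) • x - G *ᵥ (M' *ᵥ x))
    (hy' : star y' = (star y ⬝ᵥ ((M' * G) *ᵥ y)) • star y - star y ᵥ* (M' * G)) :
    star y' ⬝ᵥ x + star y ⬝ᵥ x' = frobInner (Smat x y G) M' * (star y ⬝ᵥ x) := by
  have hyx' : star y ⬝ᵥ x' = (star x ⬝ᵥ (G *ᵥ (M' *ᵥ x))) * (star y ⬝ᵥ x) := by
    rw [hx', dotProduct_sub, dotProduct_smul, dotProduct_mulVec (star y) G, hyG,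
      zero_dotProduct, sub_zero, smul_eq_mul]
  have hy'x : star y' ⬝ᵥ x = (star y ⬝ᵥ ((M' * G) *ᵥ y)) * (star y ⬝ᵥ x) := by
    rw [hy', sub_dotProduct, smul_dotProduct, ← dotProduct_mulVec, ← mulVec_mulVec x, hGx,
      mulVec_zero, dotProduct_zero, sub_zero, smul_eq_mul]
  rw [hyx', hy'x, frobInner_Smat, mulVec_mulVec, add_mul]

end Eigenvectors

theorem stmt6_general {n : ℕ} (ε : ℝ)
    (E E' : ℝ → Matrix (Fin n) (Fin n) ℂ)
    (U V : ℝ → Matrix (Fin n) (Fin 2) ℂ) (T : ℝ → Matrix (Fin 2) (Fin 2) ℂ)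
    (x x' y y' : ℝ → (Fin n → ℂ))
    (G : ℝ → Matrix (Fin n) (Fin n) ℂ)
    (hxdiff : ∀ t i, HasDerivAt (fun s => x s i) (x' t i) t)
    (hydiff : ∀ t i, HasDerivAt (fun s => y s i) (y' t i) t)
    (hyx : ∀ t, star (y t) ⬝ᵥ x t ≠ 0)
    (hGx : ∀ t, G t *ᵥ x t = 0)
    (hyG : ∀ t, star (y t) ᵥ* G t = 0)
    (hx' : ∀ t, x' t =
      (star (x t) ⬝ᵥ (G t *ᵥ (((ε : ℂ) • E' t) *ᵥ x t))) • x t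
        - G t *ᵥ (((ε : ℂ) • E' t) *ᵥ x t))
    (hy' : ∀ t, star (y' t) =
      (star (y t) ⬝ᵥ ((((ε : ℂ) • E' t) * G t) *ᵥ y t)) • star (y t)
        - star (y t) ᵥ* (((ε : ℂ) • E' t) * G t))
    (hUorth : ∀ t, (U t)ᴴ * U t = 1)
    (hVorth : ∀ t, (V t)ᴴ * V t = 1)
    (hEfac : ∀ t, E t = U t * T t * (V t)ᴴ)
    (hEnorm : ∀ t, frobNorm (E t) = 1)
    (hODE : ∀ t, E' t = -(PE (U t) (V t) (Smat (x t) (y t) (G t)))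
        + (frobInner (E t) (Smat (x t) (y t) (G t))).re • E t) :
    ∀ t, HasDerivAt (fun s => ‖star (y s) ⬝ᵥ x s‖)
      (-(ε * ‖star (y t) ⬝ᵥ x t‖) *
        frobNorm (PE (U t) (V t) (Smat (x t) (y t) (G t))
          - (frobInner (E t) (Smat (x t) (y t) (G t))).re • E t) ^ 2) t := by
  intro t
  set S := Smat (x t) (y t) (G t)
  have hPE : PE (U t) (V t) (E t) = E t := by
    rw [hEfac t]
    exact PE_mul_mul_conjTranspose (hUorth t) (T t)
  have hE' : E' t = -(PE (U t) (V t) S - (frobInner (E t) S).re • E t) := by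
    rw [hODE t, neg_sub, sub_eq_neg_add]
  have hf : HasDerivAt (fun s => star (y s) ⬝ᵥ x s)
      (frobInner S ((ε : ℂ) • E' t) * (star (y t) ⬝ᵥ x t)) t := by
    rw [← star_dotProduct_variation_eq_frobInner_Smat_mul (hGx t) (hyG t) _ (hx' t) (hy' t)]
    exact HasDerivAt.star_dotProduct (hxdiff t) (hydiff t)
  convert hf.norm_of_eq_mul (hyx t) using 1
  rw [frobInner_smul_right, hE', frobInner_neg_right, Complex.re_ofReal_mul, Complex.neg_re,
    re_frobInner_PE_sub_smul_eq_frobNorm_sq (hUorth t) (hVorth t) hPE (hEnorm t)]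
  ring

theorem stmt6 {n : ℕ} (hn : 2 ≤ n) (A : Matrix (Fin n) (Fin n) ℂ) (ε : ℝ) (hε : 0 < ε)
    (E E' : ℝ → Matrix (Fin n) (Fin n) ℂ)
    (U V : ℝ → Matrix (Fin n) (Fin 2) ℂ) (T : ℝ → Matrix (Fin 2) (Fin 2) ℂ)
    (x x' y y' : ℝ → (Fin n → ℂ))
    (lam lam' : ℝ → ℂ)
    (G G' : ℝ → Matrix (Fin n) (Fin n) ℂ)
    (hEdiff : ∀ t i j, HasDerivAt (fun s => E s i j) (E' t i j) t)
    (hxdiff : ∀ t i, HasDerivAt (fun s => x s i) (x' t i) t)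
    (hydiff : ∀ t i, HasDerivAt (fun s => y s i) (y' t i) t)
    (hlamdiff : ∀ t, HasDerivAt lam (lam' t) t)
    (hGdiff : ∀ t i j, HasDerivAt (fun s => G s i j) (G' t i j) t)
    (heig : ∀ t, (A + (ε : ℂ) • E t) *ᵥ x t = lam t • x t)
    (hleig : ∀ t, star (y t) ᵥ* (A + (ε : ℂ) • E t) = lam t • star (y t))
    (hxnorm : ∀ t, star (x t) ⬝ᵥ x t = 1)
    (hynorm : ∀ t, star (y t) ⬝ᵥ y t = 1)
    (hyx : ∀ t, star (y t) ⬝ᵥ x t ≠ 0)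
    (hG : ∀ t, IsGroupInverse (A + (ε : ℂ) • E t - lam t • 1) (G t))
    (hGx : ∀ t, G t *ᵥ x t = 0)
    (hyG : ∀ t, star (y t) ᵥ* G t = 0)
    (hx' : ∀ t, x' t =
      (star (x t) ⬝ᵥ (G t *ᵥ (((ε : ℂ) • E' t) *ᵥ x t))) • x t
        - G t *ᵥ (((ε : ℂ) • E' t) *ᵥ x t))
    (hy' : ∀ t, star (y' t) =
      (star (y t) ⬝ᵥ ((((ε : ℂ) • E' t) * G t) *ᵥ y t)) • star (y t)
        - star (y t) ᵥ* (((ε : ℂ) • E' t) * G t))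
    (hUorth : ∀ t, (U t)ᴴ * U t = 1)
    (hVorth : ∀ t, (V t)ᴴ * V t = 1)
    (hTinv : ∀ t, IsUnit (T t))
    (hEfac : ∀ t, E t = U t * T t * (V t)ᴴ)
    (hEnorm : ∀ t, frobNorm (E t) = 1)
    (hODE : ∀ t, E' t = -(PE (U t) (V t) (Smat (x t) (y t) (G t)))
        + (frobInner (E t) (Smat (x t) (y t) (G t))).re • E t) :
    ∀ t, HasDerivAt (fun s => ‖star (y s) ⬝ᵥ x s‖)
      (-(ε * ‖star (y t) ⬝ᵥ x t‖) *
        frobNorm (PE (U t) (V t) (Smat (x t) (y t) (G t))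
          - (frobInner (E t) (Smat (x t) (y t) (G t))).re • E t) ^ 2) t :=
  stmt6_general ε E E' U V T x x' y y' G hxdiff hydiff hyx hGx hyG hx' hy' hUorth hVorth hEfac
    hEnorm hODE
end

section
/- Fix A ∈ ℂ^{n×n} and ε > 0. Let U, V ∈ ℂ^{n×2} have orthonormal columns, T ∈ ℂ^{2×2} be invertible, E = U T V^H with ‖E‖_F = 1. Let λ ∈ ℂ, which is NOT an eigenvalue of A, let x, y ∈ ℂ^n be unit vectors with (A+εE)x = λx, y^H(A+εE) = λ y^H, y^H x ≠ 0 and |y^H x| < 1, suppose rank(A+εE−λI) = n−1, and let G be a group inverse of A+εE−λI. Set S = y y^H G^H + G^H x x^H and P_E(Z) = Z − (I − UU^H) Z (I − VV^H). If E is a stationary point of the projected flow, i.e. P_E(S) = Re⟨E,S⟩E, then E = μ S for some real number μ. In particular the stationary points of the projected rank-2 flow coincide with those of the unprojected flow. -/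
open Matrix

/-!
Write `M = A + εE - λI`, `S = Smat x y G` and `c = Re⟨E, S⟩`. Multiplying the stationarity
equation by `V Vᴴ` on the right, resp. by `U Uᴴ` on the left, gives `S V Vᴴ = c E` and
`U Uᴴ S = c E`.

The vectors `y` and `Gᴴ x` are linearly independent: otherwise `xᴴ M G = 0`, and the projector
`1 - M G`, whose range lies in `ker M = span {x}`, would fix both `xᴴ` and `yᴴ`; this makes `yᴴ`
a multiple of `xᴴ` and forces `|yᴴ x| = 1`.

If `c = 0` then `S V = 0`, and since `S v = (yᴴ Gᴴ v) y + (xᴴ v) Gᴴ x` independence gives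
`Vᴴ x = 0`, so `E x = 0` and `x` would be an eigenvector of `A` for `λ`. If `c ≠ 0` then
`range E ⊆ range S`, and `rank S ≤ 2 = rank E` makes the two ranges equal; hence
`range S ⊆ range U`, so `S = U Uᴴ S = c E`.
-/

namespace Matrix

section Field

variable {K : Type*} [Field K] {l m o : Type*} [Fintype m] [Fintype o]

lemma range_mulVecLin_mul_le (A : Matrix l m K) (B : Matrix m o K) :
    LinearMap.range (A * B).mulVecLin ≤ LinearMap.range A.mulVecLin := by
  rw [mulVecLin_mul]
  exact LinearMap.range_comp_le_range _ _

lemma rank_add_le (A B : Matrix l m K) : (A + B).rank ≤ A.rank + B.rank := by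
  unfold rank
  rw [mulVecLin_add]
  exact (Submodule.finrank_mono (LinearMap.range_add_le _ _)).trans
    (Submodule.finrank_add_le_finrank_add_finrank _ _)

lemma range_mulVecLin_eq_of_rank_le [Fintype l] {A : Matrix l m K} {B : Matrix l o K}
    (C : Matrix m o K) (hB : A * C = B) (hrank : A.rank ≤ B.rank) :
    LinearMap.range A.mulVecLin = LinearMap.range B.mulVecLin :=
  (Submodule.eq_of_le_of_finrank_le (hB ▸ range_mulVecLin_mul_le A C) hrank).symm

lemma ker_mulVecLin_eq_span_singleton {M : Matrix m m K}
    (hrank : M.rank = Fintype.card m - 1) {x : m → K} (hMx : M *ᵥ x = 0) (hx : x ≠ 0) :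
    LinearMap.ker M.mulVecLin = Submodule.span K {x} := by
  have hle : Submodule.span K {x} ≤ LinearMap.ker M.mulVecLin := by
    rwa [Submodule.span_singleton_le_iff_mem, LinearMap.mem_ker, mulVecLin_apply]
  have hsum := LinearMap.finrank_range_add_finrank_ker M.mulVecLin
  rw [Module.finrank_fintype_fun_eq_card] at hsum
  refine (Submodule.eq_of_le_of_finrank_le hle ?_).symm
  rw [finrank_span_singleton hx]
  have : 0 < Fintype.card m := Fintype.card_pos_iff.2 (Function.ne_iff.1 hx).nonempty
  change M.rank + _ = _ at hsum
  omega

lemma exists_eq_vecMulVec_of_mul_eq_zero {M : Matrix l m K} {x : m → K}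
    (hker : LinearMap.ker M.mulVecLin = Submodule.span K {x})
    {P : Matrix m o K} (hMP : M * P = 0) : ∃ p : o → K, P = vecMulVec x p := by
  classical
  have hcol : ∀ j, ∃ a : K, a • x = fun i => P i j := by
    intro j
    rw [← Submodule.mem_span_singleton, ← hker, LinearMap.mem_ker, mulVecLin_apply]
    have h : M *ᵥ (P *ᵥ Pi.single j 1) = 0 := by rw [mulVec_mulVec, hMP, zero_mulVec]
    rwa [mulVec_single_one] at h
  choose p hp using hcol
  refine ⟨p, ?_⟩
  ext i j
  simpa [vecMulVec_apply, mul_comm] using (congrFun (hp j) i).symm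

lemma eq_smul_of_vecMul_eq_self {M P : Matrix m m K} {x : m → K}
    (hker : LinearMap.ker M.mulVecLin = Submodule.span K {x}) (hMP : M * P = 0)
    {w u : m → K} (hwx : w ⬝ᵥ x = 1) (hw : w ᵥ* P = w) (hu : u ᵥ* P = u) :
    u = (u ⬝ᵥ x) • w := by
  obtain ⟨p, rfl⟩ := exists_eq_vecMulVec_of_mul_eq_zero hker hMP
  rw [vecMul_vecMulVec, hwx, one_smul] at hw
  rwa [vecMul_vecMulVec, hw, eq_comm] at hu

end Field

section StarField

variable {𝕜 : Type*} [Field 𝕜] [StarRing 𝕜] {m k o : Type*} [Fintype m] [Fintype k] [Fintype o]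
  [DecidableEq k]

lemma rank_mul_mul_conjTranspose {U V : Matrix m k 𝕜} {T : Matrix k k 𝕜}
    (hU : Uᴴ * U = 1) (hV : Vᴴ * V = 1) (hT : IsUnit T) :
    (U * T * Vᴴ).rank = Fintype.card k := by
  refine le_antisymm ((rank_mul_le_left _ _).trans <| (rank_mul_le_left _ _).trans <|
    rank_le_card_width U) ?_
  calc Fintype.card k = (Uᴴ * (U * T * Vᴴ) * V).rank := by
        rw [← rank_of_isUnit T hT]
        congr 1
        simp only [Matrix.mul_assoc, hV, ← Matrix.mul_assoc Uᴴ U, hU, Matrix.one_mul,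
          Matrix.mul_one]
    _ ≤ (U * T * Vᴴ).rank := (rank_mul_le_left _ _).trans (rank_mul_le_right _ _)

lemma mul_conjTranspose_mul_of_range_le {U : Matrix m k 𝕜} {S : Matrix m o 𝕜}
    (hU : Uᴴ * U = 1) (hS : LinearMap.range S.mulVecLin ≤ LinearMap.range U.mulVecLin) :
    U * Uᴴ * S = S := by
  refine ext_iff_mulVec.2 fun v => ?_
  obtain ⟨u, hu⟩ := hS ⟨v, rfl⟩
  rw [mulVecLin_apply, mulVecLin_apply] at hu
  rw [← mulVec_mulVec, ← hu, mulVec_mulVec, Matrix.mul_assoc, hU, Matrix.mul_one]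

lemma mul_conjTranspose_mul_eq_self_of_mul_eq_smul {U V : Matrix m k 𝕜} {T : Matrix k k 𝕜}
    (hU : Uᴴ * U = 1) (hV : Vᴴ * V = 1) (hT : IsUnit T) {S : Matrix m m 𝕜}
    (hS : S.rank ≤ Fintype.card k) {c : 𝕜} (hc : c ≠ 0) (hSV : S * (V * Vᴴ) = c • (U * T * Vᴴ)) :
    U * Uᴴ * S = S := by
  have hrange := range_mulVecLin_eq_of_rank_le (c⁻¹ • (V * Vᴴ))
    (by rw [mul_smul_comm, hSV, inv_smul_smul₀ hc])
    (hS.trans (rank_mul_mul_conjTranspose hU hV hT).ge)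
  refine mul_conjTranspose_mul_of_range_le hU ?_
  rw [hrange, Matrix.mul_assoc]
  exact range_mulVecLin_mul_le _ _

end StarField

end Matrix

lemma norm_dotProduct_eq_one_of_star_eq_smul {𝕜 m : Type*} [RCLike 𝕜] [Fintype m]
    {x y : m → 𝕜} (hy : star y ⬝ᵥ y = 1) (h : star y = (star y ⬝ᵥ x) • star x) :
    ‖star y ⬝ᵥ x‖ = 1 := by
  set s := star y ⬝ᵥ x
  have hsq : ((‖s‖ ^ 2 : ℝ) : 𝕜) = 1 :=
    calc ((‖s‖ ^ 2 : ℝ) : 𝕜) = s * star s := by rw [RCLike.star_def, RCLike.mul_conj]; norm_cast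
      _ = (s • star x) ⬝ᵥ y := by rw [smul_dotProduct, smul_eq_mul, star_dotProduct]
      _ = 1 := by rw [← h, hy]
  exact (pow_eq_one_iff_of_nonneg (norm_nonneg s) two_ne_zero).1 (by exact_mod_cast hsq)

section GroupInverse

variable {n : ℕ} {M G : Matrix (Fin n) (Fin n) ℂ}

lemma IsGroupInverse.mul_one_sub_mul_eq_zero (hG : IsGroupInverse M G) : M * (1 - M * G) = 0 := by
  rw [Matrix.mul_sub, Matrix.mul_one, hG.1, ← Matrix.mul_assoc, hG.2.2, sub_self]

lemma IsGroupInverse.conjTranspose_mulVec_ne_smul (hG : IsGroupInverse M G) {x y : Fin n → ℂ}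
    (hker : LinearMap.ker M.mulVecLin = Submodule.span ℂ {x}) (hyM : star y ᵥ* M = 0)
    (hx : star x ⬝ᵥ x = 1) (hy : star y ⬝ᵥ y = 1) (hyx : ‖star y ⬝ᵥ x‖ < 1) (a : ℂ) :
    Gᴴ *ᵥ x ≠ a • y := by
  intro hGx
  have hxG : star x ᵥ* G = star a • star y := by
    rw [← conjTranspose_conjTranspose G, ← star_mulVec, hGx, star_smul]
  have hxP : star x ᵥ* (1 - M * G) = star x := by
    rw [vecMul_sub, vecMul_one, hG.1, ← vecMul_vecMul, hxG, smul_vecMul, hyM, smul_zero,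
      sub_zero]
  have hyP : star y ᵥ* (1 - M * G) = star y := by
    rw [vecMul_sub, vecMul_one, ← vecMul_vecMul, hyM, zero_vecMul, sub_zero]
  have hyx_eq := eq_smul_of_vecMul_eq_self hker hG.mul_one_sub_mul_eq_zero hx hxP hyP
  exact hyx.ne (norm_dotProduct_eq_one_of_star_eq_smul hy hyx_eq)

end GroupInverse

section Smat

variable {n : ℕ} (x y : Fin n → ℂ) (G : Matrix (Fin n) (Fin n) ℂ)

lemma Smat_mulVec (v : Fin n → ℂ) :
    Smat x y G *ᵥ v = (star y ⬝ᵥ (Gᴴ *ᵥ v)) • y + (star x ⬝ᵥ v) • (Gᴴ *ᵥ x) := by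
  rw [Smat, add_mulVec, ← mulVec_mulVec, vecMulVec_mulVec, ← mulVec_mulVec, vecMulVec_mulVec,
    mulVec_smul, op_smul_eq_smul, op_smul_eq_smul]

lemma rank_Smat_le : (Smat x y G).rank ≤ 2 :=
  (rank_add_le _ _).trans <| add_le_add
    ((rank_mul_le_left _ _).trans (rank_vecMulVec_le _ _))
    ((rank_mul_le_right _ _).trans (rank_vecMulVec_le _ _))

variable {x y G} in
lemma conjTranspose_mulVec_eq_zero_of_Smat_mul_eq_zero {k : Type*} [Fintype k]
    (hxy : LinearIndependent ℂ ![y, Gᴴ *ᵥ x]) {V : Matrix (Fin n) k ℂ}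
    (hSV : Smat x y G * V = 0) : Vᴴ *ᵥ x = 0 := by
  classical
  have hxV : star x ᵥ* V = 0 := by
    funext j
    have h : Smat x y G *ᵥ (V *ᵥ Pi.single j 1) = 0 := by rw [mulVec_mulVec, hSV, zero_mulVec]
    rw [Smat_mulVec] at h
    have := (LinearIndependent.pair_iff.1 hxy _ _ h).2
    rwa [dotProduct_mulVec, dotProduct_single_one] at this
  rw [← star_star x, ← star_vecMul, hxV, star_zero]

end Smat

section Projection

variable {n : ℕ} {U V : Matrix (Fin n) (Fin 2) ℂ} {T : Matrix (Fin 2) (Fin 2) ℂ}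
  {Z : Matrix (Fin n) (Fin n) ℂ} {c : ℂ}

lemma mul_mul_conjTranspose_of_PE_eq_smul (hV : Vᴴ * V = 1)
    (h : PE U V Z = c • (U * T * Vᴴ)) : Z * (V * Vᴴ) = c • (U * T * Vᴴ) := by
  have hV' : ∀ X : Matrix (Fin 2) (Fin n) ℂ, Vᴴ * (V * X) = X := fun X => by
    rw [← Matrix.mul_assoc, hV, Matrix.one_mul]
  have := congrArg (· * (V * Vᴴ)) h
  simpa only [PE, Matrix.sub_mul, Matrix.one_mul, Matrix.mul_assoc, hV', sub_self,
    Matrix.mul_zero, sub_zero, smul_mul_assoc] using this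

lemma mul_conjTranspose_mul_of_PE_eq_smul (hU : Uᴴ * U = 1)
    (h : PE U V Z = c • (U * T * Vᴴ)) : U * Uᴴ * Z = c • (U * T * Vᴴ) := by
  have hU' : U * Uᴴ * U = U := by rw [Matrix.mul_assoc, hU, Matrix.mul_one]
  have := congrArg (U * Uᴴ * ·) h
  simpa only [PE, Matrix.mul_sub, Matrix.mul_one, ← Matrix.mul_assoc, hU', sub_self,
    Matrix.zero_mul, sub_zero, mul_smul_comm] using this

end Projection

theorem stmt9_general {n : ℕ} (A : Matrix (Fin n) (Fin n) ℂ) (ε : ℝ)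
    (U V : Matrix (Fin n) (Fin 2) ℂ) (T : Matrix (Fin 2) (Fin 2) ℂ)
    (hU : Uᴴ * U = 1) (hV : Vᴴ * V = 1) (hT : IsUnit T)
    (E : Matrix (Fin n) (Fin n) ℂ) (hE : E = U * T * Vᴴ)
    (lam : ℂ) (hlam : ∀ v : Fin n → ℂ, A *ᵥ v = lam • v → v = 0)
    (x y : Fin n → ℂ)
    (hxnorm : star x ⬝ᵥ x = 1) (hynorm : star y ⬝ᵥ y = 1)
    (heig : (A + (ε : ℂ) • E) *ᵥ x = lam • x)
    (hleig : star y ᵥ* (A + (ε : ℂ) • E) = lam • star y)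
    (hyx1 : ‖star y ⬝ᵥ x‖ < 1)
    (hrank : (A + (ε : ℂ) • E - lam • 1).rank = n - 1)
    (G : Matrix (Fin n) (Fin n) ℂ)
    (hG : IsGroupInverse (A + (ε : ℂ) • E - lam • 1) G)
    (hstat : PE U V (Smat x y G) = (frobInner E (Smat x y G)).re • E) :
    ∃ μ : ℝ, E = μ • Smat x y G := by
  set M := A + (ε : ℂ) • E - lam • 1
  set S := Smat x y G
  set c := (frobInner E S).re
  have hx0 : x ≠ 0 := by rintro rfl; simp at hxnorm
  have hy0 : y ≠ 0 := by rintro rfl; simp at hynorm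
  have hMx : M *ᵥ x = 0 := by rw [sub_mulVec, heig, smul_mulVec, one_mulVec, sub_self]
  have hyM : star y ᵥ* M = 0 := by rw [vecMul_sub, hleig, vecMul_smul, vecMul_one, sub_self]
  have hker := ker_mulVecLin_eq_span_singleton (by rwa [Fintype.card_fin]) hMx hx0
  have hxy : LinearIndependent ℂ ![y, Gᴴ *ᵥ x] := (LinearIndependent.pair_iff' hy0).2
    fun a h => hG.conjTranspose_mulVec_ne_smul hker hyM hxnorm hynorm hyx1 a h.symm
  subst hE
  have hstat' : PE U V S = (c : ℂ) • (U * T * Vᴴ) := by rw [hstat, Complex.coe_smul]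
  have hSV := mul_mul_conjTranspose_of_PE_eq_smul hV hstat'
  rcases eq_or_ne c 0 with hc | hc
  · have hVx : Vᴴ *ᵥ x = 0 := by
      refine conjTranspose_mulVec_eq_zero_of_Smat_mul_eq_zero hxy ?_
      rw [hc, Complex.ofReal_zero, zero_smul] at hSV
      rw [← Matrix.mul_one (S * V), ← hV, ← Matrix.mul_assoc, Matrix.mul_assoc S, hSV,
        Matrix.zero_mul]
    refine absurd (hlam x ?_) hx0
    rwa [add_mulVec, smul_mulVec, ← mulVec_mulVec, hVx, mulVec_zero, smul_zero, add_zero] at heig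
  · have hS : U * Uᴴ * S = S := mul_conjTranspose_mul_eq_self_of_mul_eq_smul hU hV hT
      (rank_Smat_le x y G) (by exact_mod_cast hc) hSV
    refine ⟨c⁻¹, ?_⟩
    rw [← hS, mul_conjTranspose_mul_of_PE_eq_smul hU hstat', Complex.coe_smul, smul_smul,
      inv_mul_cancel₀ hc, one_smul]

theorem stmt9 {n : ℕ} (A : Matrix (Fin n) (Fin n) ℂ) (ε : ℝ) (hε : 0 < ε)
    (U V : Matrix (Fin n) (Fin 2) ℂ) (T : Matrix (Fin 2) (Fin 2) ℂ)
    (hU : Uᴴ * U = 1) (hV : Vᴴ * V = 1) (hT : IsUnit T)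
    (E : Matrix (Fin n) (Fin n) ℂ) (hE : E = U * T * Vᴴ)
    (hEnorm : frobNorm E = 1)
    (lam : ℂ) (hlam : ∀ v : Fin n → ℂ, A *ᵥ v = lam • v → v = 0)
    (x y : Fin n → ℂ)
    (hxnorm : star x ⬝ᵥ x = 1) (hynorm : star y ⬝ᵥ y = 1)
    (heig : (A + (ε : ℂ) • E) *ᵥ x = lam • x)
    (hleig : star y ᵥ* (A + (ε : ℂ) • E) = lam • star y)
    (hyx : star y ⬝ᵥ x ≠ 0)
    (hyx1 : ‖star y ⬝ᵥ x‖ < 1)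
    (hrank : (A + (ε : ℂ) • E - lam • 1).rank = n - 1)
    (G : Matrix (Fin n) (Fin n) ℂ)
    (hG : IsGroupInverse (A + (ε : ℂ) • E - lam • 1) G)
    (hstat : PE U V (Smat x y G) = (frobInner E (Smat x y G)).re • E) :
    ∃ μ : ℝ, E = μ • Smat x y G :=
  stmt9_general A ε U V T hU hV hT E hE lam hlam x y hxnorm hynorm heig hleig hyx1 hrank G hG hstat
end

section
/- Suppose in addition (to the real path setup) that for each t, E(t) = U(t)T(t)V(t)^T with U(t), V(t) ∈ ℝ^{n×4} having orthonormal columns, T(t) ∈ ℝ^{4×4} invertible, ‖E(t)‖_F = 1, and that E solves the projected differential equation Ė = −P̃_E(Re(S)) + ⟨E, Re(S)⟩E, where S(t) = y y^H G^H + G^H x x^H, Re(S) is the entrywise real part, and P̃_E(Z) = Z − (I − UU^T) Z (I − VV^T). Then d/dt |y(t)^H x(t)| = −ε |y(t)^H x(t)| · ‖P̃_E(Re(S)) − ⟨E, Re(S)⟩E‖_F². -/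
/-
Along the path, `f = yᴴx` satisfies `ḟ = c f` with `c = xᴴ G Ṁ x + yᴴ Ṁ G y`, because `G x = 0` and
`yᴴ G = 0` kill the remaining terms of `ẏᴴx + yᴴẋ`; hence `d|f|/dt = Re(c) |f|`. For a real
perturbation `Re c = ε ⟨Re S, Ė⟩`, and inserting the ODE for `E` this is `-ε ‖Y‖²` with
`Y = P̃_E(Re S) - ⟨E, Re S⟩ E`: since `P̃_E` is an orthogonal projection fixing `E` and `‖E‖ = 1`,
`Y` is the orthogonal projection of `Re S` onto a subspace, so `⟨Re S, Y⟩ = ⟨Y, Y⟩`.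
-/

open Matrix

/-- Real Frobenius inner product `⟨A,B⟩ = trace(Aᵀ B)`. -/
def frobInnerR {n : ℕ} (A B : Matrix (Fin n) (Fin n) ℝ) : ℝ :=
  (Aᵀ * B).trace

/-- Real Frobenius norm. -/
noncomputable def frobNormR {n : ℕ} (A : Matrix (Fin n) (Fin n) ℝ) : ℝ :=
  Real.sqrt (frobInnerR A A)

/-- Complexification of a real matrix. -/
def toC {n : ℕ} (M : Matrix (Fin n) (Fin n) ℝ) : Matrix (Fin n) (Fin n) ℂ :=
  M.map (fun a => (a : ℂ))

/-- Orthogonal projection onto the tangent space of the real rank-4 manifold at `E = U T Vᵀ`: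
`P̃_E(Z) = Z − (I − UUᵀ) Z (I − VVᵀ)`. -/
def PER {n : ℕ} (U V : Matrix (Fin n) (Fin 4) ℝ) (Z : Matrix (Fin n) (Fin n) ℝ) :
    Matrix (Fin n) (Fin n) ℝ :=
  Z - (1 - U * Uᵀ) * Z * (1 - V * Vᵀ)

section Frobenius

variable {n : ℕ}

lemma frobInnerR_eq_sum (A B : Matrix (Fin n) (Fin n) ℝ) :
    frobInnerR A B = ∑ i, ∑ j, A i j * B i j := by
  simp only [frobInnerR, Matrix.trace, diag_apply, Matrix.mul_apply, transpose_apply]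
  exact Finset.sum_comm

lemma frobInnerR_comm (A B : Matrix (Fin n) (Fin n) ℝ) : frobInnerR A B = frobInnerR B A := by
  rw [frobInnerR, frobInnerR, ← trace_transpose, transpose_mul, transpose_transpose]

lemma frobInnerR_add_left (A B C : Matrix (Fin n) (Fin n) ℝ) :
    frobInnerR (A + B) C = frobInnerR A C + frobInnerR B C := by
  simp [frobInnerR, Matrix.add_mul]

lemma frobInnerR_sub_left (A B C : Matrix (Fin n) (Fin n) ℝ) :
    frobInnerR (A - B) C = frobInnerR A C - frobInnerR B C := by
  simp [frobInnerR, Matrix.sub_mul]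

lemma frobInnerR_smul_left (r : ℝ) (A B : Matrix (Fin n) (Fin n) ℝ) :
    frobInnerR (r • A) B = r * frobInnerR A B := by
  simp [frobInnerR]

lemma frobInnerR_sub_right (A B C : Matrix (Fin n) (Fin n) ℝ) :
    frobInnerR A (B - C) = frobInnerR A B - frobInnerR A C := by
  simp [frobInnerR, Matrix.mul_sub]

lemma frobInnerR_add_right (A B C : Matrix (Fin n) (Fin n) ℝ) :
    frobInnerR A (B + C) = frobInnerR A B + frobInnerR A C := by
  simp [frobInnerR, Matrix.mul_add]

lemma frobInnerR_neg_right (A B : Matrix (Fin n) (Fin n) ℝ) :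
    frobInnerR A (-B) = -frobInnerR A B := by
  simp [frobInnerR]

lemma frobInnerR_smul_right (r : ℝ) (A B : Matrix (Fin n) (Fin n) ℝ) :
    frobInnerR A (r • B) = r * frobInnerR A B := by
  simp [frobInnerR]

lemma frobInnerR_mul_mul_left (Q Z P B : Matrix (Fin n) (Fin n) ℝ) :
    frobInnerR (Q * Z * P) B = frobInnerR Z (Qᵀ * B * Pᵀ) := by
  simp only [frobInnerR, transpose_mul, Matrix.mul_assoc]
  rw [trace_mul_comm]
  simp only [Matrix.mul_assoc]

lemma frobNormR_sq (A : Matrix (Fin n) (Fin n) ℝ) : frobNormR A ^ 2 = frobInnerR A A := by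
  refine Real.sq_sqrt ?_
  rw [frobInnerR_eq_sum]
  exact Finset.sum_nonneg fun i _ => Finset.sum_nonneg fun j _ => mul_self_nonneg _

end Frobenius

section Projection

variable {m k : Type*} [Fintype m] [DecidableEq m] [Fintype k] [DecidableEq k] {U : Matrix m k ℝ}

omit [Fintype m] [DecidableEq k] in
lemma transpose_one_sub_mul_transpose : (1 - U * Uᵀ)ᵀ = 1 - U * Uᵀ := by
  rw [transpose_sub, transpose_one, transpose_mul, transpose_transpose]

lemma one_sub_mul_transpose_mul_self (hU : Uᵀ * U = 1) : (1 - U * Uᵀ) * U = 0 := by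
  rw [Matrix.sub_mul, Matrix.one_mul, Matrix.mul_assoc, hU, Matrix.mul_one, sub_self]

lemma one_sub_mul_transpose_mul_idem (hU : Uᵀ * U = 1) :
    (1 - U * Uᵀ) * (1 - U * Uᵀ) = 1 - U * Uᵀ := by
  rw [Matrix.mul_sub, Matrix.mul_one, ← Matrix.mul_assoc, one_sub_mul_transpose_mul_self hU,
    Matrix.zero_mul, sub_zero]

end Projection

section TangentProjection

variable {n : ℕ} {U V : Matrix (Fin n) (Fin 4) ℝ}

lemma frobInnerR_complement_factor_eq_zero (hU : Uᵀ * U = 1) (T : Matrix (Fin 4) (Fin 4) ℝ)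
    (Z : Matrix (Fin n) (Fin n) ℝ) :
    frobInnerR ((1 - U * Uᵀ) * Z * (1 - V * Vᵀ)) (U * T * Vᵀ) = 0 := by
  rw [frobInnerR_mul_mul_left, transpose_one_sub_mul_transpose, Matrix.mul_assoc U,
    ← Matrix.mul_assoc _ U, one_sub_mul_transpose_mul_self hU]
  simp [frobInnerR]

lemma frobInnerR_complement_self (hU : Uᵀ * U = 1) (hV : Vᵀ * V = 1)
    (Z : Matrix (Fin n) (Fin n) ℝ) :
    frobInnerR ((1 - U * Uᵀ) * Z * (1 - V * Vᵀ)) Z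
      = frobInnerR ((1 - U * Uᵀ) * Z * (1 - V * Vᵀ)) ((1 - U * Uᵀ) * Z * (1 - V * Vᵀ)) := by
  rw [frobInnerR_mul_mul_left _ _ _ ((1 - U * Uᵀ) * Z * (1 - V * Vᵀ)),
    transpose_one_sub_mul_transpose, transpose_one_sub_mul_transpose, frobInnerR_comm,
    show ∀ Q P : Matrix (Fin n) (Fin n) ℝ, Q * (Q * Z * P) * P = Q * Q * Z * (P * P) by
      intro Q P; simp only [Matrix.mul_assoc],
    one_sub_mul_transpose_mul_idem hU, one_sub_mul_transpose_mul_idem hV]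

lemma frobInnerR_PER_sub_smul_eq (hU : Uᵀ * U = 1) (hV : Vᵀ * V = 1)
    {T : Matrix (Fin 4) (Fin 4) ℝ} {E : Matrix (Fin n) (Fin n) ℝ} (hE : E = U * T * Vᵀ)
    (hE1 : frobInnerR E E = 1) (Z : Matrix (Fin n) (Fin n) ℝ) :
    frobInnerR Z (PER U V Z - frobInnerR E Z • E)
      = frobInnerR (PER U V Z - frobInnerR E Z • E) (PER U V Z - frobInnerR E Z • E) := by
  set W := (1 - U * Uᵀ) * Z * (1 - V * Vᵀ)
  have hWE : frobInnerR W E = 0 := hE ▸ frobInnerR_complement_factor_eq_zero hU T Z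
  have hWZ : frobInnerR W Z = frobInnerR W W := frobInnerR_complement_self hU hV Z
  rw [show PER U V Z = Z - W from rfl]
  simp only [frobInnerR_sub_left, frobInnerR_sub_right, frobInnerR_smul_left,
    frobInnerR_smul_right]
  rw [frobInnerR_comm Z W, frobInnerR_comm Z E, frobInnerR_comm E W, hWE, hWZ, hE1]
  ring

end TangentProjection

section RealPart

variable {n : ℕ} (x y : Fin n → ℂ) (G : Matrix (Fin n) (Fin n) ℂ) (B : Matrix (Fin n) (Fin n) ℝ)

lemma re_star_dotProduct_mulVec_toC_mulVec :
    (star x ⬝ᵥ (G *ᵥ (toC B *ᵥ x))).re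
      = frobInnerR ((Gᴴ * vecMulVec x (star x)).map Complex.re) B := by
  simp only [frobInnerR_eq_sum, dotProduct, mulVec, Pi.star_apply, toC, Matrix.map_apply,
    Matrix.mul_apply, conjTranspose_apply, vecMulVec_apply, Complex.re_sum, Finset.mul_sum,
    Finset.sum_mul]
  rw [Finset.sum_comm]
  refine Finset.sum_congr rfl fun i _ => ?_
  rw [Finset.sum_comm]
  refine Finset.sum_congr rfl fun j _ => Finset.sum_congr rfl fun m _ => ?_
  simp only [RCLike.star_def, Complex.mul_re, Complex.mul_im, Complex.conj_re, Complex.conj_im,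
    Complex.ofReal_re, Complex.ofReal_im, zero_mul, mul_neg, neg_mul, sub_zero, add_zero,
    sub_neg_eq_add]
  ring

lemma re_star_dotProduct_toC_mul_mulVec :
    (star y ⬝ᵥ ((toC B * G) *ᵥ y)).re
      = frobInnerR ((vecMulVec y (star y) * Gᴴ).map Complex.re) B := by
  simp only [frobInnerR_eq_sum, dotProduct, mulVec, Pi.star_apply, toC, Matrix.map_apply,
    Matrix.mul_apply, conjTranspose_apply, vecMulVec_apply, Complex.re_sum, Finset.mul_sum,
    Finset.sum_mul]
  refine Finset.sum_congr rfl fun i _ => ?_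
  rw [Finset.sum_comm]
  refine Finset.sum_congr rfl fun j _ => Finset.sum_congr rfl fun m _ => ?_
  simp only [RCLike.star_def, Complex.mul_re, Complex.mul_im, Complex.conj_re, Complex.conj_im,
    Complex.ofReal_re, Complex.ofReal_im, zero_mul, mul_neg, neg_mul, sub_zero, add_zero,
    sub_neg_eq_add]
  ring

lemma re_add_eq_frobInnerR_Smat :
    (star x ⬝ᵥ (G *ᵥ (toC B *ᵥ x)) + star y ⬝ᵥ ((toC B * G) *ᵥ y)).re
      = frobInnerR ((Smat x y G).map Complex.re) B := by
  rw [Complex.add_re, re_star_dotProduct_mulVec_toC_mulVec, re_star_dotProduct_toC_mul_mulVec,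
    Smat, Matrix.map_add _ Complex.add_re, frobInnerR_add_left, add_comm]

end RealPart

section Calculus

open scoped InnerProductSpace

variable {t : ℝ}

lemma HasDerivAt.norm_of_ne_zero {F : Type*} [NormedAddCommGroup F] [InnerProductSpace ℝ F]
    {f : ℝ → F} {f' : F} (hf : HasDerivAt f f' t) (h0 : f t ≠ 0) :
    HasDerivAt (‖f ·‖) (⟪f t, f'⟫_ℝ / ‖f t‖) t := by
  have hsq : ‖f t‖ ^ 2 ≠ 0 := pow_ne_zero 2 (norm_ne_zero_iff.2 h0)
  convert hf.norm_sq.sqrt hsq using 1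
  · simp [Real.sqrt_sq (norm_nonneg _)]
  · rw [Real.sqrt_sq (norm_nonneg _)]
    field_simp

lemma HasDerivAt.norm_of_eq_mul_self {f : ℝ → ℂ} {c : ℂ} (hf : HasDerivAt f (c * f t) t)
    (h0 : f t ≠ 0) : HasDerivAt (‖f ·‖) (c.re * ‖f t‖) t := by
  convert hf.norm_of_ne_zero h0 using 1
  rw [Complex.inner, mul_assoc, Complex.mul_conj, Complex.normSq_eq_norm_sq,
    Complex.re_mul_ofReal]
  field_simp [norm_ne_zero_iff.2 h0]

lemma HasDerivAt.star_dotProduct_s11 {ι : Type*} [Fintype ι] {u v : ℝ → ι → ℂ} {u' v' : ι → ℂ}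
    (hu : ∀ i, HasDerivAt (fun s => u s i) (u' i) t)
    (hv : ∀ i, HasDerivAt (fun s => v s i) (v' i) t) :
    HasDerivAt (fun s => star (u s) ⬝ᵥ v s) (star u' ⬝ᵥ v t + star (u t) ⬝ᵥ v') t := by
  simpa [dotProduct, Finset.sum_add_distrib] using
    HasDerivAt.fun_sum fun i _ => (hu i).star.mul (hv i)

end Calculus

lemma star_dotProduct_deriv_eq_mul {n : ℕ} {x y x' y' : Fin n → ℂ} {G K : Matrix (Fin n) (Fin n) ℂ}
    (hGx : G *ᵥ x = 0) (hyG : star y ᵥ* G = 0)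
    (hx' : x' = (star x ⬝ᵥ (G *ᵥ (K *ᵥ x))) • x - G *ᵥ (K *ᵥ x))
    (hy' : star y' = (star y ⬝ᵥ ((K * G) *ᵥ y)) • star y - star y ᵥ* (K * G)) :
    star y' ⬝ᵥ x + star y ⬝ᵥ x'
      = (star x ⬝ᵥ (G *ᵥ (K *ᵥ x)) + star y ⬝ᵥ ((K * G) *ᵥ y)) * (star y ⬝ᵥ x) := by
  have hx : star y ⬝ᵥ x' = star x ⬝ᵥ (G *ᵥ (K *ᵥ x)) * (star y ⬝ᵥ x) := by
    rw [hx', dotProduct_sub, dotProduct_smul, dotProduct_mulVec (star y), hyG, zero_dotProduct,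
      sub_zero, smul_eq_mul]
  have hy : star y' ⬝ᵥ x = star y ⬝ᵥ ((K * G) *ᵥ y) * (star y ⬝ᵥ x) := by
    rw [hy', sub_dotProduct, smul_dotProduct, ← dotProduct_mulVec, ← mulVec_mulVec x K G, hGx,
      mulVec_zero, dotProduct_zero, sub_zero, smul_eq_mul]
  rw [hx, hy]
  ring

theorem stmt11_general {n : ℕ} (ε : ℝ)
    (E E' : ℝ → Matrix (Fin n) (Fin n) ℝ)
    (U V : ℝ → Matrix (Fin n) (Fin 4) ℝ) (T : ℝ → Matrix (Fin 4) (Fin 4) ℝ)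
    (x x' y y' : ℝ → (Fin n → ℂ))
    (G : ℝ → Matrix (Fin n) (Fin n) ℂ)
    (hxdiff : ∀ t i, HasDerivAt (fun s => x s i) (x' t i) t)
    (hydiff : ∀ t i, HasDerivAt (fun s => y s i) (y' t i) t)
    (hyx : ∀ t, star (y t) ⬝ᵥ x t ≠ 0)
    (hGx : ∀ t, G t *ᵥ x t = 0)
    (hyG : ∀ t, star (y t) ᵥ* G t = 0)
    (hx' : ∀ t, x' t =
      (star (x t) ⬝ᵥ (G t *ᵥ (toC (ε • E' t) *ᵥ x t))) • x t
        - G t *ᵥ (toC (ε • E' t) *ᵥ x t))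
    (hy' : ∀ t, star (y' t) =
      (star (y t) ⬝ᵥ ((toC (ε • E' t) * G t) *ᵥ y t)) • star (y t)
        - star (y t) ᵥ* (toC (ε • E' t) * G t))
    (hUorth : ∀ t, (U t)ᵀ * U t = 1)
    (hVorth : ∀ t, (V t)ᵀ * V t = 1)
    (hEfac : ∀ t, E t = U t * T t * (V t)ᵀ)
    (hEnorm : ∀ t, frobNormR (E t) = 1)
    (hODE : ∀ t, E' t =
        -(PER (U t) (V t) ((Smat (x t) (y t) (G t)).map Complex.re))
          + (frobInnerR (E t) ((Smat (x t) (y t) (G t)).map Complex.re)) • E t) :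
    ∀ t, HasDerivAt (fun s => ‖star (y s) ⬝ᵥ x s‖)
      (-(ε * ‖star (y t) ⬝ᵥ x t‖) *
        frobNormR (PER (U t) (V t) ((Smat (x t) (y t) (G t)).map Complex.re)
          - (frobInnerR (E t) ((Smat (x t) (y t) (G t)).map Complex.re)) • E t) ^ 2) t := by
  intro t
  have hE1 : frobInnerR (E t) (E t) = 1 := by rw [← frobNormR_sq, hEnorm t, one_pow]
  have hf := HasDerivAt.star_dotProduct_s11 (hydiff t) (hxdiff t)
  rw [star_dotProduct_deriv_eq_mul (hGx t) (hyG t) (hx' t) (hy' t)] at hf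
  convert hf.norm_of_eq_mul_self (hyx t) using 1
  rw [re_add_eq_frobInnerR_Smat, frobInnerR_smul_right, hODE t, frobInnerR_add_right,
    frobInnerR_neg_right, frobInnerR_smul_right, frobNormR_sq,
    ← frobInnerR_PER_sub_smul_eq (hUorth t) (hVorth t) (hEfac t) hE1, frobInnerR_sub_right,
    frobInnerR_smul_right]
  ring

theorem stmt11 {n : ℕ} (hn : 2 ≤ n) (A : Matrix (Fin n) (Fin n) ℝ) (ε : ℝ) (hε : 0 < ε)
    (E E' : ℝ → Matrix (Fin n) (Fin n) ℝ)
    (U V : ℝ → Matrix (Fin n) (Fin 4) ℝ) (T : ℝ → Matrix (Fin 4) (Fin 4) ℝ)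
    (x x' y y' : ℝ → (Fin n → ℂ))
    (lam lam' : ℝ → ℂ)
    (G G' : ℝ → Matrix (Fin n) (Fin n) ℂ)
    (hEdiff : ∀ t i j, HasDerivAt (fun s => E s i j) (E' t i j) t)
    (hxdiff : ∀ t i, HasDerivAt (fun s => x s i) (x' t i) t)
    (hydiff : ∀ t i, HasDerivAt (fun s => y s i) (y' t i) t)
    (hlamdiff : ∀ t, HasDerivAt lam (lam' t) t)
    (hGdiff : ∀ t i j, HasDerivAt (fun s => G s i j) (G' t i j) t)
    (heig : ∀ t, toC (A + ε • E t) *ᵥ x t = lam t • x t)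
    (hleig : ∀ t, star (y t) ᵥ* toC (A + ε • E t) = lam t • star (y t))
    (hxnorm : ∀ t, star (x t) ⬝ᵥ x t = 1)
    (hynorm : ∀ t, star (y t) ⬝ᵥ y t = 1)
    (hyx : ∀ t, star (y t) ⬝ᵥ x t ≠ 0)
    (hG : ∀ t, IsGroupInverse (toC (A + ε • E t) - lam t • 1) (G t))
    (hGx : ∀ t, G t *ᵥ x t = 0)
    (hyG : ∀ t, star (y t) ᵥ* G t = 0)
    (hx' : ∀ t, x' t =
      (star (x t) ⬝ᵥ (G t *ᵥ (toC (ε • E' t) *ᵥ x t))) • x t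
        - G t *ᵥ (toC (ε • E' t) *ᵥ x t))
    (hy' : ∀ t, star (y' t) =
      (star (y t) ⬝ᵥ ((toC (ε • E' t) * G t) *ᵥ y t)) • star (y t)
        - star (y t) ᵥ* (toC (ε • E' t) * G t))
    (hUorth : ∀ t, (U t)ᵀ * U t = 1)
    (hVorth : ∀ t, (V t)ᵀ * V t = 1)
    (hTinv : ∀ t, IsUnit (T t))
    (hEfac : ∀ t, E t = U t * T t * (V t)ᵀ)
    (hEnorm : ∀ t, frobNormR (E t) = 1)
    (hODE : ∀ t, E' t =
        -(PER (U t) (V t) ((Smat (x t) (y t) (G t)).map Complex.re))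
          + (frobInnerR (E t) ((Smat (x t) (y t) (G t)).map Complex.re)) • E t) :
    ∀ t, HasDerivAt (fun s => ‖star (y s) ⬝ᵥ x s‖)
      (-(ε * ‖star (y t) ⬝ᵥ x t‖) *
        frobNormR (PER (U t) (V t) ((Smat (x t) (y t) (G t)).map Complex.re)
          - (frobInnerR (E t) ((Smat (x t) (y t) (G t)).map Complex.re)) • E t) ^ 2) t :=
  stmt11_general ε E E' U V T x x' y y' G hxdiff hydiff hyx hGx hyG hx' hy' hUorth hVorth hEfac
    hEnorm hODE
end

section
/- Let x, y ∈ ℂ^n with ‖x‖₂ = ‖y‖₂ = 1 and r = y^H x ≠ 0, and let B ∈ ℂ^{n×n} satisfy x^H B = 0 and B y = 0. Set Π = I − x y^H/r, G = Π B Π, C = y^H B x, and S = y y^H G^H + G^H x x^H. Then G = (C/r²) x y^H − (B x y^H + x y^H B)/r + B, and S^H = (2C/r²) x y^H − (B x y^H + x y^H B)/r. -/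
open Matrix

lemma mul_vecMulVec' {n : ℕ} (M : Matrix (Fin n) (Fin n) ℂ) (a b : Fin n → ℂ) :
    M * vecMulVec a b = vecMulVec (M *ᵥ a) b := by
  ext i j
  simp [vecMulVec_apply, mul_apply, mulVec, dotProduct, Finset.sum_mul, mul_assoc]

lemma vecMulVec_mul' {n : ℕ} (M : Matrix (Fin n) (Fin n) ℂ) (a b : Fin n → ℂ) :
    vecMulVec a b * M = vecMulVec a (b ᵥ* M) := by
  ext i j
  simp [vecMulVec_apply, mul_apply, vecMul, dotProduct, Finset.mul_sum, mul_assoc,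
    mul_left_comm]

lemma vecMulVec_mulVec' {n : ℕ} (a b c : Fin n → ℂ) :
    vecMulVec a b *ᵥ c = (b ⬝ᵥ c) • a := by
  ext i
  simp [vecMulVec_apply, mulVec, dotProduct, Finset.sum_mul, mul_assoc, mul_comm,
    Finset.mul_sum, mul_left_comm]

lemma vecMul_vecMulVec' {n : ℕ} (a b c : Fin n → ℂ) :
    a ᵥ* vecMulVec b c = (a ⬝ᵥ b) • c := by
  ext i
  simp [vecMulVec_apply, vecMul, dotProduct, Finset.sum_mul, mul_assoc]

lemma vecMulVec_smul_left' {n : ℕ} (s : ℂ) (a b : Fin n → ℂ) :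
    vecMulVec (s • a) b = s • vecMulVec a b := by
  ext i j; simp [vecMulVec_apply, mul_assoc]

lemma vecMulVec_smul_right' {n : ℕ} (s : ℂ) (a b : Fin n → ℂ) :
    vecMulVec a (s • b) = s • vecMulVec a b := by
  ext i j; simp [vecMulVec_apply]; ring

lemma vecMulVec_zero' {n : ℕ} (a : Fin n → ℂ) : vecMulVec a (0 : Fin n → ℂ) = 0 := by
  ext i j; simp [vecMulVec_apply]

lemma zero_vecMulVec' {n : ℕ} (a : Fin n → ℂ) : vecMulVec (0 : Fin n → ℂ) a = 0 := by
  ext i j; simp [vecMulVec_apply]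

lemma conjTranspose_vecMulVec' {n : ℕ} (a b : Fin n → ℂ) :
    (vecMulVec a b)ᴴ = vecMulVec (star b) (star a) := by
  ext i j; simp [vecMulVec_apply, mul_comm]

theorem stmt16 {n : ℕ} (x y : Fin n → ℂ)
    (hxnorm : star x ⬝ᵥ x = 1) (hynorm : star y ⬝ᵥ y = 1)
    (r : ℂ) (hr : r = star y ⬝ᵥ x) (hr0 : r ≠ 0)
    (B : Matrix (Fin n) (Fin n) ℂ)
    (hxB : star x ᵥ* B = 0) (hBy : B *ᵥ y = 0)
    (Pi G : Matrix (Fin n) (Fin n) ℂ)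
    (hPi : Pi = 1 - r⁻¹ • vecMulVec x (star y))
    (hG : G = Pi * B * Pi)
    (C : ℂ) (hC : C = star y ⬝ᵥ (B *ᵥ x)) :
    G = (C / r ^ 2) • vecMulVec x (star y)
        - r⁻¹ • (B * vecMulVec x (star y) + vecMulVec x (star y) * B) + B
    ∧ (Smat x y G)ᴴ = (2 * C / r ^ 2) • vecMulVec x (star y)
        - r⁻¹ • (B * vecMulVec x (star y) + vecMulVec x (star y) * B) := by
  have hCyB : star y ᵥ* B ⬝ᵥ x = C := by rw [hC, dotProduct_mulVec]
  have hyBy : star y ᵥ* B ⬝ᵥ y = 0 := by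
    rw [← dotProduct_mulVec, hBy]; simp
  have hxBx : star x ⬝ᵥ B *ᵥ x = 0 := by
    rw [dotProduct_mulVec, hxB]; simp
  have hG' : G = (C / r ^ 2) • vecMulVec x (star y)
      - r⁻¹ • (B * vecMulVec x (star y) + vecMulVec x (star y) * B) + B := by
    subst hG hPi
    simp only [mul_sub, sub_mul, mul_one, one_mul, Matrix.mul_smul, Matrix.smul_mul,
      vecMulVec_mul', mul_vecMulVec', vecMulVec_mulVec', vecMul_vecMulVec',
      vecMulVec_smul_left', vecMulVec_smul_right', hCyB, smul_smul]
    match_scalars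
    all_goals try field_simp
    all_goals try ring
    all_goals simp
  refine ⟨hG', ?_⟩
  have hS : (Smat x y G)ᴴ = G * vecMulVec y (star y) + vecMulVec x (star x) * G := by
    simp [Smat, conjTranspose_add, conjTranspose_mul, conjTranspose_conjTranspose,
      conjTranspose_vecMulVec']
  rw [hS, hG']
  simp only [add_mul, sub_mul, mul_add, mul_sub, Matrix.mul_smul, Matrix.smul_mul,
    vecMulVec_mul', mul_vecMulVec', vecMulVec_mulVec', vecMul_vecMulVec',
    vecMulVec_smul_left', vecMulVec_smul_right', Matrix.mulVec_smul, smul_dotProduct,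
    dotProduct_smul, hCyB, hyBy, hxB, hBy, hxBx, hxnorm, hynorm,
    vecMulVec_zero', zero_vecMulVec', smul_zero, zero_smul, one_smul, smul_smul]
  match_scalars
  all_goals try field_simp
  all_goals try ring
  all_goals simp
end
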